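/- Monotonicity of class membership along the order (Corollary 1): Let φ be an STL formula with a classification criterion fixed as in the context, and let (ψ, σ) ∈ ⪯⁻(φ). Then for every signal w: if w ∈ V(ψ) then w ∈ V(σ), and if w ∉ V(σ) then w ∉ V(ψ). -/

import Mathlib

namespace STLClass

abbrev Signal (N : ℕ) := ℝ → Fin N → ℝ

def shift {N : ℕ} (w : Signal N) (t : ℝ) : Signal N := fun t' => w (t + t')

inductive STL (N : ℕ) : Type where
  | atom (f : (Fin N → ℝ) → ℝ)
  | falsum
  | not (φ : STL N)
  | and (φ₁ φ₂ : STL N)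
  | or (φ₁ φ₂ : STL N)
  | always (a b : ℝ) (φ : STL N)
  | event (a b : ℝ) (φ : STL N)
  | untl (a b : ℝ) (φ₁ φ₂ : STL N)

def STL.top {N : ℕ} : STL N := .not .falsum

noncomputable def robust {N : ℕ} : STL N → Signal N → EReal
  | .atom f, w => ((f (w 0) : ℝ) : EReal)
  | .falsum, _ => ⊥
  | .not φ, w => - robust φ w
  | .and φ₁ φ₂, w => min (robust φ₁ w) (robust φ₂ w)
  | .or φ₁ φ₂, w => max (robust φ₁ w) (robust φ₂ w)
  | .always a b φ, w => ⨅ t : Set.Icc a b, robust φ (shift w t.1)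
  | .event a b φ, w => ⨆ t : Set.Icc a b, robust φ (shift w t.1)
  | .untl a b φ₁ φ₂, w =>
      ⨆ t : Set.Icc a b,
        min (robust φ₂ (shift w t.1)) (⨅ t' : Set.Ico (0 : ℝ) t.1, robust φ₁ (shift w t'.1))

def Sat {N : ℕ} (w : Signal N) (φ : STL N) : Prop := 0 < robust φ w

def Vio {N : ℕ} (w : Signal N) (φ : STL N) : Prop := robust φ w < 0

/-- An STL formula together with a classification criterion: each temporal operator is
annotated with a natural number `k`, meaning that its interval is split into `k + 1`
consecutive segments (so the "positive integer" of the criterion is `k + 1`). -/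
inductive AForm (N : ℕ) : Type where
  | atom (f : (Fin N → ℝ) → ℝ)
  | falsum
  | not (φ : AForm N)
  | and (φ₁ φ₂ : AForm N)
  | or (φ₁ φ₂ : AForm N)
  | always (a b : ℝ) (k : ℕ) (φ : AForm N)
  | event (a b : ℝ) (k : ℕ) (φ : AForm N)
  | untl (a b : ℝ) (k : ℕ) (φ₁ φ₂ : AForm N)

/-- The underlying STL formula of an annotated formula. -/
def AForm.toSTL {N : ℕ} : AForm N → STL N
  | .atom f => .atom f
  | .falsum => .falsum
  | .not φ => .not φ.toSTL
  | .and φ₁ φ₂ => .and φ₁.toSTL φ₂.toSTL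
  | .or φ₁ φ₂ => .or φ₁.toSTL φ₂.toSTL
  | .always a b _ φ => .always a b φ.toSTL
  | .event a b _ φ => .event a b φ.toSTL
  | .untl a b _ φ₁ φ₂ => .untl a b φ₁.toSTL φ₂.toSTL

/-- Well-formedness: every temporal interval `[a, b]` satisfies `0 ≤ a < b`. -/
def AForm.WF {N : ℕ} : AForm N → Prop
  | .atom _ => True
  | .falsum => True
  | .not φ => φ.WF
  | .and φ₁ φ₂ => φ₁.WF ∧ φ₂.WF
  | .or φ₁ φ₂ => φ₁.WF ∧ φ₂.WF
  | .always a b _ φ => 0 ≤ a ∧ a < b ∧ φ.WF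
  | .event a b _ φ => 0 ≤ a ∧ a < b ∧ φ.WF
  | .untl a b _ φ₁ φ₂ => 0 ≤ a ∧ a < b ∧ φ₁.WF ∧ φ₂.WF

/-- A split of the interval `[a, b]` into `n` consecutive nonsingular segments:
`n + 1` strictly increasing points starting at `a` and ending at `b`.  The segment
`i` is `[pts i.castSucc, pts i.succ]`. -/
structure Split (a b : ℝ) (n : ℕ) : Type where
  pts : Fin (n + 1) → ℝ
  strictMono : StrictMono pts
  first : pts 0 = a
  last : pts (Fin.last n) = b

/-- The valuation space `Θ` of an annotated formula: a choice of admissible breakpoints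
for each temporal subformula. -/
def Val {N : ℕ} : AForm N → Type
  | .atom _ => PUnit
  | .falsum => PUnit
  | .not φ => Val φ
  | .and φ₁ φ₂ => Val φ₁ × Val φ₂
  | .or φ₁ φ₂ => Val φ₁ × Val φ₂
  | .always a b k φ => Split a b (k + 1) × Val φ
  | .event a b k φ => Split a b (k + 1) × Val φ
  | .untl a b k φ₁ φ₂ => Split a b (k + 1) × Val φ₁ × Val φ₂

/-- Finite conjunction of a list of STL formulas (empty conjunction is `⊤`). -/
def listAnd {N : ℕ} : List (STL N) → STL N
  | [] => STL.top
  | [φ] => φ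
  | φ :: φ' :: rest => .and φ (listAnd (φ' :: rest))

/-- Finite disjunction of a list of STL formulas (empty disjunction is `⊥`). -/
def listOr {N : ℕ} : List (STL N) → STL N
  | [] => .falsum
  | [φ] => φ
  | φ :: φ' :: rest => .or φ (listOr (φ' :: rest))

/-- `⋀_{i} f i`. -/
def iAnd {N : ℕ} {k : ℕ} (f : Fin k → STL N) : STL N := listAnd (List.ofFn f)

/-- `⋁_{i} f i`. -/
def iOr {N : ℕ} {k : ℕ} (f : Fin k → STL N) : STL N := listOr (List.ofFn f)

/-- `Cls true φ` is the set `Cls⁺(φ)` of satisfaction classes and `Cls false φ` is the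
set `Cls⁻(φ)` of violation classes; a class is represented by its instantiation map
`Θ → STL N` sending a valuation `θ` to the STL formula `ψ(θ)`. -/
def Cls {N : ℕ} : Bool → (φ : AForm N) → Set (Val φ → STL N)
  | b, .atom f =>
      {fun _ => if b then STL.falsum else STL.top, fun _ => STL.atom f}
  | _, .falsum => {fun _ => STL.falsum}
  | b, .not φ =>
      {c | ∃ ψ ∈ Cls (!b) φ, c = fun θ => STL.not (ψ θ)}
  | b, .and φ₁ φ₂ =>
      {c | ∃ ψ₁ ∈ Cls b φ₁, ∃ ψ₂ ∈ Cls b φ₂,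
        c = fun θ => STL.and (ψ₁ θ.1) (ψ₂ θ.2)}
  | b, .or φ₁ φ₂ =>
      {c | ∃ ψ₁ ∈ Cls b φ₁, ∃ ψ₂ ∈ Cls b φ₂,
        c = fun θ => STL.or (ψ₁ θ.1) (ψ₂ θ.2)}
  | b, .always _ _ k φ =>
      {c | ∃ ψ : Fin (k + 1) → Val φ → STL N, (∀ i, ψ i ∈ Cls b φ) ∧
        c = fun θ => iAnd fun i : Fin (k + 1) =>
          STL.always (θ.1.pts i.castSucc) (θ.1.pts i.succ) (ψ i θ.2)}
  | b, .event _ _ k φ =>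
      {c | ∃ ψ : Fin (k + 1) → Val φ → STL N, (∀ i, ψ i ∈ Cls b φ) ∧
        c = fun θ => iOr fun i : Fin (k + 1) =>
          STL.event (θ.1.pts i.castSucc) (θ.1.pts i.succ) (ψ i θ.2)}
  | b, .untl _ _ k φ₁ φ₂ =>
      {c | ∃ ψ : Fin (k + 1) → Val φ₁ → STL N, ∃ σ : Fin (k + 1) → Val φ₂ → STL N,
           ∃ ξ : Fin (k + 1) → Fin (k + 1) → Val φ₁ → STL N,
        (∀ i, ψ i ∈ Cls b φ₁) ∧ (∀ i, σ i ∈ Cls b φ₂) ∧ (∀ i j, ξ i j ∈ Cls b φ₁) ∧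
        c = fun θ => iOr fun i : Fin (k + 1) =>
          STL.and
            (STL.untl (θ.1.pts i.castSucc) (θ.1.pts i.succ) (ψ i θ.2.1) (σ i θ.2.2))
            (iAnd fun j : Fin (i : ℕ) =>
              STL.always (θ.1.pts (j.castLE i.isLt.le).castSucc)
                (θ.1.pts (j.castLE i.isLt.le).succ) (ξ i (j.castLE i.isLt.le) θ.2.1))}

/-- The satisfiable set `S(ψ)` of a class. -/
def SatSet {N : ℕ} (φ : AForm N) (ψ : Val φ → STL N) : Set (Signal N) :=
  {w | ∃ θ : Val φ, Sat w (ψ θ)}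

/-- The falsifiable set `V(ψ)` of a class. -/
def VioSet {N : ℕ} (φ : AForm N) (ψ : Val φ → STL N) : Set (Signal N) :=
  {w | ∃ θ : Val φ, Vio w (ψ θ)}


/-- `Pre true φ` is the relation `⪯⁺(φ)` and `Pre false φ` is the relation `⪯⁻(φ)`,
given as sets of pairs of classes. -/
def Pre {N : ℕ} : Bool → (φ : AForm N) → Set ((Val φ → STL N) × (Val φ → STL N))
  | b, .atom f =>
      { (fun _ => if b then STL.falsum else STL.top, fun _ => STL.atom f),
        (fun _ => STL.atom f, fun _ => STL.atom f),
        (fun _ => if b then STL.falsum else STL.top,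
         fun _ => if b then STL.falsum else STL.top) }
  | _, .falsum => {(fun _ => STL.falsum, fun _ => STL.falsum)}
  | b, .not φ =>
      {p | ∃ q ∈ Pre (!b) φ,
        p = (fun θ => STL.not (q.1 θ), fun θ => STL.not (q.2 θ))}
  | b, .and φ₁ φ₂ =>
      {p | ∃ q₁ ∈ Pre b φ₁, ∃ q₂ ∈ Pre b φ₂,
        p = (fun θ => STL.and (q₁.1 θ.1) (q₂.1 θ.2),
             fun θ => STL.and (q₁.2 θ.1) (q₂.2 θ.2))}
  | b, .or φ₁ φ₂ =>
      {p | ∃ q₁ ∈ Pre b φ₁, ∃ q₂ ∈ Pre b φ₂,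
        p = (fun θ => STL.or (q₁.1 θ.1) (q₂.1 θ.2),
             fun θ => STL.or (q₁.2 θ.1) (q₂.2 θ.2))}
  | b, .always _ _ k φ =>
      {p | ∃ ψ σ : Fin (k + 1) → Val φ → STL N, (∀ i, (ψ i, σ i) ∈ Pre b φ) ∧
        p = (fun θ => iAnd fun i : Fin (k + 1) =>
               STL.always (θ.1.pts i.castSucc) (θ.1.pts i.succ) (ψ i θ.2),
             fun θ => iAnd fun i : Fin (k + 1) =>
               STL.always (θ.1.pts i.castSucc) (θ.1.pts i.succ) (σ i θ.2))}
  | b, .event _ _ k φ =>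
      {p | ∃ ψ σ : Fin (k + 1) → Val φ → STL N, (∀ i, (ψ i, σ i) ∈ Pre b φ) ∧
        p = (fun θ => iOr fun i : Fin (k + 1) =>
               STL.event (θ.1.pts i.castSucc) (θ.1.pts i.succ) (ψ i θ.2),
             fun θ => iOr fun i : Fin (k + 1) =>
               STL.event (θ.1.pts i.castSucc) (θ.1.pts i.succ) (σ i θ.2))}
  | b, .untl _ _ k φ₁ φ₂ =>
      {p | ∃ ψ ψ' : Fin (k + 1) → Val φ₁ → STL N,
           ∃ σ σ' : Fin (k + 1) → Val φ₂ → STL N,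
           ∃ ξ ξ' : Fin (k + 1) → Fin (k + 1) → Val φ₁ → STL N,
        (∀ i, (ψ i, ψ' i) ∈ Pre b φ₁) ∧ (∀ i, (σ i, σ' i) ∈ Pre b φ₂) ∧
        (∀ i j, (ξ i j, ξ' i j) ∈ Pre b φ₁) ∧
        p = (fun θ => iOr fun i : Fin (k + 1) =>
               STL.and
                 (STL.untl (θ.1.pts i.castSucc) (θ.1.pts i.succ) (ψ i θ.2.1) (σ i θ.2.2))
                 (iAnd fun j : Fin (i : ℕ) =>
                   STL.always (θ.1.pts (j.castLE i.isLt.le).castSucc)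
                     (θ.1.pts (j.castLE i.isLt.le).succ) (ξ i (j.castLE i.isLt.le) θ.2.1)),
             fun θ => iOr fun i : Fin (k + 1) =>
               STL.and
                 (STL.untl (θ.1.pts i.castSucc) (θ.1.pts i.succ) (ψ' i θ.2.1) (σ' i θ.2.2))
                 (iAnd fun j : Fin (i : ℕ) =>
                   STL.always (θ.1.pts (j.castLE i.isLt.le).castSucc)
                     (θ.1.pts (j.castLE i.isLt.le).succ) (ξ' i (j.castLE i.isLt.le) θ.2.1)))}

/-! By induction on `φ`: for every pair `(ψ, σ)` in `⪯⁺(φ)` the robustness of `ψ(θ)` is at most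
that of `σ(θ)`, for every valuation `θ` and signal `w`, and for pairs in `⪯⁻(φ)` it is at least
that; negation swaps the two relations, so both directions are proved together. Hence a
violation of `ψ(θ)` is a violation of `σ(θ)` with the same `θ`. -/

def OrientedLE {α : Type*} [LE α] (b : Bool) (x y : α) : Prop := if b then x ≤ y else y ≤ x

namespace OrientedLE

variable {α : Type*} {b : Bool}

theorem refl [Preorder α] (b : Bool) (x : α) : OrientedLE b x x := by
  cases b <;> exact le_rfl

theorem neg {x y : EReal} (h : OrientedLE (!b) x y) : OrientedLE b (-x) (-y) := by
  cases b <;> exact EReal.neg_le_neg_iff.mpr h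

theorem min [LinearOrder α] {x₁ x₂ y₁ y₂ : α} (h₁ : OrientedLE b x₁ y₁)
    (h₂ : OrientedLE b x₂ y₂) : OrientedLE b (min x₁ x₂) (min y₁ y₂) := by
  cases b <;> exact min_le_min h₁ h₂

theorem max [LinearOrder α] {x₁ x₂ y₁ y₂ : α} (h₁ : OrientedLE b x₁ y₁)
    (h₂ : OrientedLE b x₂ y₂) : OrientedLE b (max x₁ x₂) (max y₁ y₂) := by
  cases b <;> exact max_le_max h₁ h₂

theorem iInf [CompleteLattice α] {ι : Sort*} {f g : ι → α} (h : ∀ i, OrientedLE b (f i) (g i)) :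
    OrientedLE b (⨅ i, f i) (⨅ i, g i) := by
  cases b <;> exact iInf_mono h

theorem iSup [CompleteLattice α] {ι : Sort*} {f g : ι → α} (h : ∀ i, OrientedLE b (f i) (g i)) :
    OrientedLE b (⨆ i, f i) (⨆ i, g i) := by
  cases b <;> exact iSup_mono h

end OrientedLE

section BigConnectives

variable {N : ℕ} {b : Bool} {w : Signal N}

theorem OrientedLE.robust_listAnd {l l' : List (STL N)}
    (h : List.Forall₂ (fun φ φ' => OrientedLE b (robust φ w) (robust φ' w)) l l') :
    OrientedLE b (robust (listAnd l) w) (robust (listAnd l') w) := by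
  induction h with
  | nil => exact .refl b _
  | cons hhead htail ih =>
    cases htail with
    | nil => exact hhead
    | cons => exact hhead.min ih

theorem OrientedLE.robust_listOr {l l' : List (STL N)}
    (h : List.Forall₂ (fun φ φ' => OrientedLE b (robust φ w) (robust φ' w)) l l') :
    OrientedLE b (robust (listOr l) w) (robust (listOr l') w) := by
  induction h with
  | nil => exact .refl b _
  | cons hhead htail ih =>
    cases htail with
    | nil => exact hhead
    | cons => exact hhead.max ih

theorem _root_.List.forall₂_ofFn {α β : Type*} {R : α → β → Prop} {k : ℕ} {f : Fin k → α}
    {g : Fin k → β} (h : ∀ i, R (f i) (g i)) : List.Forall₂ R (List.ofFn f) (List.ofFn g) :=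
  List.forall₂_iff_get.2 ⟨by simp, fun i _ _ => by simpa using h _⟩

theorem OrientedLE.robust_iAnd {k : ℕ} {f g : Fin k → STL N}
    (h : ∀ i, OrientedLE b (robust (f i) w) (robust (g i) w)) :
    OrientedLE b (robust (iAnd f) w) (robust (iAnd g) w) :=
  robust_listAnd (List.forall₂_ofFn h)

theorem OrientedLE.robust_iOr {k : ℕ} {f g : Fin k → STL N}
    (h : ∀ i, OrientedLE b (robust (f i) w) (robust (g i) w)) :
    OrientedLE b (robust (iOr f) w) (robust (iOr g) w) :=
  robust_listOr (List.forall₂_ofFn h)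

end BigConnectives

theorem orientedLE_robust_of_mem_Pre {N : ℕ} (φ : AForm N) :
    ∀ b, ∀ p ∈ Pre b φ, ∀ θ w, OrientedLE b (robust (p.1 θ) w) (robust (p.2 θ) w) := by
  induction φ with
  | atom f =>
    rintro (_ | _) _ (rfl | rfl | rfl) θ w <;> simp [OrientedLE, robust, STL.top]
  | falsum => rintro b _ rfl θ w; exact .refl b _
  | not φ ih => rintro b _ ⟨q, hq, rfl⟩ θ w; exact (ih _ q hq θ w).neg
  | and φ₁ φ₂ ih₁ ih₂ =>
    rintro b _ ⟨q₁, hq₁, q₂, hq₂, rfl⟩ θ w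
    exact (ih₁ b q₁ hq₁ θ.1 w).min (ih₂ b q₂ hq₂ θ.2 w)
  | or φ₁ φ₂ ih₁ ih₂ =>
    rintro b _ ⟨q₁, hq₁, q₂, hq₂, rfl⟩ θ w
    exact (ih₁ b q₁ hq₁ θ.1 w).max (ih₂ b q₂ hq₂ θ.2 w)
  | always _ _ _ φ ih =>
    rintro b _ ⟨ψ, σ, hpre, rfl⟩ θ w
    exact .robust_iAnd fun i => .iInf fun t => ih b _ (hpre i) θ.2 _
  | event _ _ _ φ ih =>
    rintro b _ ⟨ψ, σ, hpre, rfl⟩ θ w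
    exact .robust_iOr fun i => .iSup fun t => ih b _ (hpre i) θ.2 _
  | untl _ _ _ φ₁ φ₂ ih₁ ih₂ =>
    rintro b _ ⟨ψ, ψ', σ, σ', ξ, ξ', hψ, hσ, hξ, rfl⟩ θ w
    refine .robust_iOr fun i => .min ?_ ?_
    · exact .iSup fun t => (ih₂ b _ (hσ i) θ.2.2 _).min
        (.iInf fun t' => ih₁ b _ (hψ i) θ.2.1 _)
    · exact .robust_iAnd fun j => .iInf fun t => ih₁ b _ (hξ i _) θ.2.1 _

theorem mem_VioSet_of_robust_le {N : ℕ} {φ : AForm N} {ψ σ : Val φ → STL N} {w : Signal N}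
    (h : ∀ θ, robust (σ θ) w ≤ robust (ψ θ) w) (hw : w ∈ VioSet φ ψ) : w ∈ VioSet φ σ :=
  let ⟨θ, hθ⟩ := hw
  ⟨θ, (h θ).trans_lt hθ⟩

theorem pre_vio_monotone_general {N : ℕ} (φ : AForm N)
    (ψ σ : Val φ → STL N) (h : (ψ, σ) ∈ Pre false φ) (w : Signal N) :
    (w ∈ VioSet φ ψ → w ∈ VioSet φ σ) ∧ (w ∉ VioSet φ σ → w ∉ VioSet φ ψ) := by
  have hmono : w ∈ VioSet φ ψ → w ∈ VioSet φ σ :=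
    mem_VioSet_of_robust_le fun θ => orientedLE_robust_of_mem_Pre φ false _ h θ w
  exact ⟨hmono, mt hmono⟩

/-- Monotonicity of class membership along the order (Corollary 1): if
`(ψ, σ) ∈ ⪯⁻(φ)` then for every signal `w`, `w ∈ V(ψ)` implies `w ∈ V(σ)`, and
`w ∉ V(σ)` implies `w ∉ V(ψ)`. -/
theorem pre_vio_monotone {N : ℕ} (φ : AForm N) (hφ : φ.WF)
    (ψ σ : Val φ → STL N) (h : (ψ, σ) ∈ Pre false φ) (w : Signal N) :
    (w ∈ VioSet φ ψ → w ∈ VioSet φ σ) ∧ (w ∉ VioSet φ σ → w ∉ VioSet φ ψ) :=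
  pre_vio_monotone_general φ ψ σ h w

end STLClass
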